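/- Let f be a conjugation-invariant functional on TL_{1,2} with values in an R-module M satisfying the Markov-rule instance u(1+u²)·f(tσ_1) = −f(t). Then u²(1+u²)·f(t_1) = (u⁴ + 1)·f(t). -/

import Mathlib

/- Common setup: the mixed braid group `B_{1,n}`, the generalized Hecke algebra
of type B `H_{1,n}(u)`, and the generalized Temperley–Lieb algebra of type B
`TL_{1,n}`, following the paper's presentations. The generator `none` is `t`
and `some i` is `σ_{i+1}` for `i : Fin (n-1)`. -/

/-- Generators of the mixed braid group `B_{1,n}`: `none` is `t`,
`some i` is `σ_{i+1}`. -/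
abbrev B1Gen (n : ℕ) := Option (Fin (n - 1))

/-- The generator `t` in the free group. -/
def tF (n : ℕ) : FreeGroup (B1Gen n) := FreeGroup.of none

/-- The generator `σ_{i+1}` in the free group. -/
def sF (n : ℕ) (i : Fin (n - 1)) : FreeGroup (B1Gen n) := FreeGroup.of (some i)

/-- The relators of the mixed braid group `B_{1,n}`:
`σ₁tσ₁t = tσ₁tσ₁`; `tσ_i = σ_it` for `i > 1`; the braid relations
`σ_iσ_{i+1}σ_i = σ_{i+1}σ_iσ_{i+1}`; and `σ_iσ_j = σ_jσ_i` for `|i−j| > 1`. -/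
def mixedRels (n : ℕ) : Set (FreeGroup (B1Gen n)) :=
  { r | (∃ i : Fin (n - 1), (i : ℕ) = 0 ∧
          r = sF n i * tF n * sF n i * tF n * (tF n * sF n i * tF n * sF n i)⁻¹) ∨
        (∃ i : Fin (n - 1), 0 < (i : ℕ) ∧
          r = tF n * sF n i * (sF n i * tF n)⁻¹) ∨
        (∃ i j : Fin (n - 1), (j : ℕ) = (i : ℕ) + 1 ∧
          r = sF n i * sF n j * sF n i * (sF n j * sF n i * sF n j)⁻¹) ∨
        (∃ i j : Fin (n - 1), (i : ℕ) + 1 < (j : ℕ) ∧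
          r = sF n i * sF n j * (sF n j * sF n i)⁻¹) }

/-- The mixed braid group `B_{1,n}`. -/
abbrev MixedBraidGroup (n : ℕ) := PresentedGroup (mixedRels n)

/-- The generator `t` of `B_{1,n}`. -/
def tB (n : ℕ) : MixedBraidGroup n := PresentedGroup.of none

/-- The generator `σ_{i+1}` of `B_{1,n}`. -/
def sB (n : ℕ) (i : Fin (n - 1)) : MixedBraidGroup n := PresentedGroup.of (some i)

variable (R : Type) [CommRing R] (u : Rˣ)

/-- The quadratic Hecke relations `σ_i² = (u − u⁻¹)σ_i + 1` in the group
algebra `R[B_{1,n}]`. -/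
inductive heckeRel (n : ℕ) :
    MonoidAlgebra R (MixedBraidGroup n) → MonoidAlgebra R (MixedBraidGroup n) → Prop where
  | quad (i : Fin (n - 1)) :
      heckeRel n
        (MonoidAlgebra.of R (MixedBraidGroup n) (sB n i) *
          MonoidAlgebra.of R (MixedBraidGroup n) (sB n i))
        (((u : R) - ((u⁻¹ : Rˣ) : R)) • MonoidAlgebra.of R (MixedBraidGroup n) (sB n i) + 1)

/-- The generalized Hecke algebra of type B, `H_{1,n}(u)`. -/
abbrev Hecke (n : ℕ) := RingQuot (heckeRel R u n)

/-- The canonical (multiplicative) map `B_{1,n} → H_{1,n}(u)`. -/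
noncomputable def toHecke (n : ℕ) : MixedBraidGroup n →* Hecke R u n :=
  (RingQuot.mkRingHom (heckeRel R u n)).toMonoidHom.comp
    (MonoidAlgebra.of R (MixedBraidGroup n))

/-- The Temperley–Lieb relations: the generators
`1 + u(σ_i + σ_{i+1}) + u²(σ_iσ_{i+1} + σ_{i+1}σ_i) + u³σ_iσ_{i+1}σ_i`
of the defining ideal are set to `0`. -/
inductive tlRel (n : ℕ) : Hecke R u n → Hecke R u n → Prop where
  | cubic (i j : Fin (n - 1)) (hij : (j : ℕ) = (i : ℕ) + 1) :
      tlRel n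
        (1 + (u : R) • (toHecke R u n (sB n i) + toHecke R u n (sB n j))
          + ((u : R) ^ 2) • (toHecke R u n (sB n i) * toHecke R u n (sB n j)
              + toHecke R u n (sB n j) * toHecke R u n (sB n i))
          + ((u : R) ^ 3) •
              (toHecke R u n (sB n i) * toHecke R u n (sB n j) * toHecke R u n (sB n i)))
        0

/-- The generalized Temperley–Lieb algebra of type B, `TL_{1,n}`. -/
abbrev TL (n : ℕ) := RingQuot (tlRel R u n)

/-- The canonical (multiplicative) map `B_{1,n} → TL_{1,n}`. -/
noncomputable def toTL (n : ℕ) : MixedBraidGroup n →* TL R u n :=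
  (RingQuot.mkRingHom (tlRel R u n)).toMonoidHom.comp (toHecke R u n)

/-- The element `t` of `TL_{1,n}`. -/
noncomputable def tT (n : ℕ) : TL R u n := toTL R u n (tB n)

/-- The element `σ₁` of `TL_{1,n}` (needs `2 ≤ n`). -/
noncomputable def σ₁T (n : ℕ) (hn : 2 ≤ n) : TL R u n :=
  toTL R u n (sB n ⟨0, by omega⟩)

/-- The element `σ₁⁻¹` of `TL_{1,n}`, the image of the inverse braid
generator (needs `2 ≤ n`). -/
noncomputable def σ₁invT (n : ℕ) (hn : 2 ≤ n) : TL R u n :=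
  toTL R u n (sB n ⟨0, by omega⟩)⁻¹

/-- The looping element `t₁ = σ₁ t σ₁` of `TL_{1,n}` (needs `2 ≤ n`). -/
noncomputable def t₁T (n : ℕ) (hn : 2 ≤ n) : TL R u n :=
  toTL R u n (sB n ⟨0, by omega⟩ * tB n * sB n ⟨0, by omega⟩)

/-! Since `σ₁² = (u - u⁻¹)σ₁ + 1`, the trace property gives
`f(σ₁tσ₁) = f(tσ₁²) = (u - u⁻¹) f(tσ₁) + f(t)`. Multiplying by `u²(1+u²)` turns the
coefficient of `f(tσ₁)` into `(u² - 1) · u(1+u²)`, and the Markov rule replaces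
`u(1+u²) f(tσ₁)` by `-f(t)`, leaving `(u²(1+u²) - (u² - 1)) f(t) = (u⁴ + 1) f(t)`. -/

theorem toHecke_apply (n : ℕ) (g : MixedBraidGroup n) :
    toHecke R u n g = RingQuot.mkAlgHom R (heckeRel R u n) (MonoidAlgebra.of R _ g) := by
  rw [toHecke, ← RingQuot.mkAlgHom_coe R]
  rfl

theorem toTL_apply (n : ℕ) (g : MixedBraidGroup n) :
    toTL R u n g = RingQuot.mkAlgHom R (tlRel R u n) (toHecke R u n g) := by
  rw [toTL, ← RingQuot.mkAlgHom_coe R]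
  rfl

theorem toHecke_sB_mul_self (n : ℕ) (i : Fin (n - 1)) :
    toHecke R u n (sB n i) * toHecke R u n (sB n i)
      = ((u : R) - ((u⁻¹ : Rˣ) : R)) • toHecke R u n (sB n i) + 1 := by
  have h := RingQuot.mkAlgHom_rel R (heckeRel.quad (R := R) (u := u) (n := n) i)
  rw [map_mul, map_add, map_smul, map_one] at h
  rwa [toHecke_apply]

theorem toTL_sB_mul_self (n : ℕ) (i : Fin (n - 1)) :
    toTL R u n (sB n i) * toTL R u n (sB n i)
      = ((u : R) - ((u⁻¹ : Rˣ) : R)) • toTL R u n (sB n i) + 1 := by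
  have h := congrArg (RingQuot.mkAlgHom R (tlRel R u n)) (toHecke_sB_mul_self R u n i)
  rw [map_mul, map_add, map_smul, map_one] at h
  rwa [toTL_apply]

theorem σ₁T_mul_self (n : ℕ) (hn : 2 ≤ n) :
    σ₁T R u n hn * σ₁T R u n hn = ((u : R) - ((u⁻¹ : Rˣ) : R)) • σ₁T R u n hn + 1 :=
  toTL_sB_mul_self R u n _

theorem t₁T_eq_mul (n : ℕ) (hn : 2 ≤ n) :
    t₁T R u n hn = σ₁T R u n hn * tT R u n * σ₁T R u n hn := by
  simp only [t₁T, σ₁T, tT, map_mul]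

theorem LinearMap.map_mul_mul_of_mul_self_eq {S A M : Type*} [CommSemiring S] [Semiring A]
    [Algebra S A] [AddCommMonoid M] [Module S M] (f : A →ₗ[S] M)
    (hf : ∀ a b : A, f (a * b) = f (b * a)) {s : A} {c : S} (hs : s * s = c • s + 1) (a : A) :
    f (s * a * s) = c • f (a * s) + f a := by
  rw [mul_assoc, hf, mul_assoc, hs, mul_add, mul_one, mul_smul_comm, map_add, map_smul]

theorem Units.sq_mul_one_add_sq_mul_sub_inv {S : Type*} [CommRing S] (v : Sˣ) :
    (v : S) ^ 2 * (1 + (v : S) ^ 2) * ((v : S) - ((v⁻¹ : Sˣ) : S))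
      = ((v : S) ^ 2 - 1) * ((v : S) * (1 + (v : S) ^ 2)) := by
  linear_combination (-(v : S) - (v : S) ^ 3) * v.mul_inv

/-- The computation `tr(t₁) = ((u⁴+1)/(u²(1+u²)))·s₁` from Section 3 of the
paper: if `u(1+u²)·f(tσ₁) = −f(t)` then `u²(1+u²)·f(t₁) = (u⁴+1)·f(t)`. -/
theorem trace_of_t1 (M : Type) [AddCommGroup M] [Module R M]
    (f : TL R u 2 →ₗ[R] M) (hf : ∀ a b : TL R u 2, f (a * b) = f (b * a))
    (hmarkov : ((u : R) * (1 + (u : R) ^ 2)) • f (tT R u 2 * σ₁T R u 2 le_rfl)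
        = -f (tT R u 2)) :
    ((u : R) ^ 2 * (1 + (u : R) ^ 2)) • f (t₁T R u 2 le_rfl)
      = ((u : R) ^ 4 + 1) • f (tT R u 2) := by
  calc ((u : R) ^ 2 * (1 + (u : R) ^ 2)) • f (t₁T R u 2 le_rfl)
      = ((u : R) ^ 2 * (1 + (u : R) ^ 2)) • (((u : R) - ((u⁻¹ : Rˣ) : R)) •
          f (tT R u 2 * σ₁T R u 2 le_rfl) + f (tT R u 2)) := by
        rw [t₁T_eq_mul, f.map_mul_mul_of_mul_self_eq hf (σ₁T_mul_self R u 2 le_rfl)]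
    _ = ((u : R) ^ 2 - 1) • (((u : R) * (1 + (u : R) ^ 2)) • f (tT R u 2 * σ₁T R u 2 le_rfl))
          + ((u : R) ^ 2 * (1 + (u : R) ^ 2)) • f (tT R u 2) := by
        rw [smul_add, smul_smul, smul_smul, u.sq_mul_one_add_sq_mul_sub_inv]
    _ = ((u : R) ^ 4 + 1) • f (tT R u 2) := by
        rw [hmarkov]
        module
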